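/- In the query phase, given a valid goal state s_goal in the finite goal region G, if every valid state of G is covered by some subregion (tᵢ, rᵢ) with the property that any valid covered state admits a valid greedy path to tᵢ, and the library contains a valid path πᵢ from s_start to each tᵢ, then the concatenation of πᵢ with the reversed greedy path from s_goal to tᵢ is a valid path from s_start to s_goal. -/

import Mathlib

/-!
The goal lies in some subregion `(tᵢ, rᵢ)`, so the greedy iteration from `s_goal` reaches `tᵢ`
along valid states and edges. Since the graph is undirected this greedy path can be walked
backwards, from `tᵢ` to `s_goal`, and it starts where the library path `πᵢ` ends; gluing the
two at `tᵢ` gives the required path.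
-/

/-- A path is valid if all its states are valid and all consecutive edges are valid. -/
def IsValidPath {S : Type*} (validS : S → Prop) (validE : S → S → Prop)
    (π : List S) : Prop :=
  (∀ s ∈ π, validS s) ∧ π.Chain' validE

namespace List

variable {α : Type*} {p q : List α}

theorem head?_append_tail_of_getLast?_eq_head? (hpq : p.getLast? = q.head?) :
    (p ++ q.tail).head? = p.head? := by
  rcases p with _ | ⟨a, p⟩
  · cases q <;> simp_all
  · rfl

theorem getLast?_append_tail_of_getLast?_eq_head? (hpq : p.getLast? = q.head?) :
    (p ++ q.tail).getLast? = q.getLast? := by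
  rcases q with _ | ⟨a, _ | ⟨b, q⟩⟩
  · simp_all
  · simpa using hpq
  · exact getLast?_append_of_ne_nil _ (cons_ne_nil b q)

end List

namespace IsValidPath

variable {S : Type*} {validS : S → Prop} {validE : S → S → Prop} {p q : List S}

theorem reverse (hsym : ∀ a b, validE a b → validE b a) (hp : IsValidPath validS validE p) :
    IsValidPath validS validE p.reverse :=
  ⟨fun s hs => hp.1 s (List.mem_reverse.mp hs),
    List.isChain_reverse.mpr (hp.2.imp fun a b => hsym a b)⟩

theorem append_tail (hp : IsValidPath validS validE p) (hq : IsValidPath validS validE q)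
    (hpq : p.getLast? = q.head?) : IsValidPath validS validE (p ++ q.tail) := by
  refine ⟨fun s hs => ?_, List.isChain_append.mpr ⟨hp.2, hq.2.tail, ?_⟩⟩
  · rcases List.mem_append.mp hs with hs | hs
    exacts [hp.1 s hs, hq.1 s (List.mem_of_mem_tail hs)]
  · intro x hx y hy
    rcases q with _ | ⟨a, q⟩
    · simp at hy
    · obtain rfl : a = x := by simpa [hpq] using hx
      exact hq.2.rel_head? hy

end IsValidPath

section Orbit

variable {S : Type*} (f : S → S) (s : S) (n : ℕ)

theorem head?_map_iterate_range_succ :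
    ((List.range (n + 1)).map fun m => f^[m] s).head? = some s := by
  simp [List.range_succ_eq_map]

theorem getLast?_map_iterate_range_succ :
    ((List.range (n + 1)).map fun m => f^[m] s).getLast? = some (f^[n] s) := by
  simp [List.range_succ]

variable {f s n}

theorem isValidPath_map_iterate_range_succ {validS : S → Prop} {validE : S → S → Prop}
    (hS : ∀ m ≤ n, validS (f^[m] s)) (hE : ∀ m < n, validE (f^[m] s) (f^[m + 1] s)) :
    IsValidPath validS validE ((List.range (n + 1)).map fun m => f^[m] s) := by
  refine ⟨fun x hx => ?_, List.isChain_map _ |>.mpr <| (List.isChain_range_succ _ n).mpr hE⟩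
  obtain ⟨m, hm, rfl⟩ := List.mem_map.mp hx
  exact hS m (Nat.lt_succ_iff.mp (List.mem_range.mp hm))

end Orbit

theorem stmt_7_general {S ι : Type*}
    (h : S → S → ℝ) (validS : S → Prop) (validE : S → S → Prop)
    -- undirected graph: edge validity is symmetric
    (hsym : ∀ a b, validE a b → validE b a)
    (sstart sgoal : S) (t : ι → S) (r : ι → ℝ) (g : ι → S → S)
    (lib : ι → List S)
    -- each library path is a valid path from sstart to the attractor t i
    (hlib : ∀ i, IsValidPath validS validE (lib i) ∧
      (lib i).head? = some sstart ∧ (lib i).getLast? = some (t i))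
    (hvgoal : validS sgoal)
    -- coverage: some subregion covers the goal state
    (hcov : ∃ i, h sgoal (t i) < r i)
    -- any valid covered state admits a valid greedy path to the attractor
    (hreach : ∀ i, ∀ s, validS s → h s (t i) < r i →
      ∃ n : ℕ, (g i)^[n] s = t i ∧
        (∀ m ≤ n, validS ((g i)^[m] s)) ∧
        (∀ m < n, validE ((g i)^[m] s) ((g i)^[m + 1] s))) :
    ∃ i, h sgoal (t i) < r i ∧ ∃ n : ℕ, (g i)^[n] sgoal = t i ∧
      IsValidPath validS validE
        (lib i ++ (((List.range (n + 1)).map (fun m => (g i)^[m] sgoal)).reverse).tail) ∧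
      (lib i ++ (((List.range (n + 1)).map (fun m => (g i)^[m] sgoal)).reverse).tail).head?
        = some sstart ∧
      (lib i ++ (((List.range (n + 1)).map (fun m => (g i)^[m] sgoal)).reverse).tail).getLast?
        = some sgoal := by
  obtain ⟨i, hi⟩ := hcov
  obtain ⟨n, hn, hS, hE⟩ := hreach i sgoal hvgoal hi
  obtain ⟨hlibValid, hlibHead, hlibLast⟩ := hlib i
  have hback : IsValidPath validS validE
      ((List.range (n + 1)).map fun m => (g i)^[m] sgoal).reverse :=
    (isValidPath_map_iterate_range_succ hS hE).reverse hsym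
  have hjoin : (lib i).getLast? =
      ((List.range (n + 1)).map fun m => (g i)^[m] sgoal).reverse.head? := by
    rw [List.head?_reverse, getLast?_map_iterate_range_succ, hn, hlibLast]
  refine ⟨i, hi, n, hn, hlibValid.append_tail hback hjoin, ?_, ?_⟩
  · rw [List.head?_append_tail_of_getLast?_eq_head? hjoin, hlibHead]
  · rw [List.getLast?_append_tail_of_getLast?_eq_head? hjoin, List.getLast?_reverse,
      head?_map_iterate_range_succ]

/-- given a valid goal state covered by some subregion `(tᵢ, rᵢ)`
such that any valid covered state admits a valid greedy path to `tᵢ`, and a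
library path `πᵢ` from `s_start` to `tᵢ`, the concatenation of `πᵢ` with the
reversed greedy path from `s_goal` to `tᵢ` is a valid path from `s_start`
to `s_goal`. -/
theorem stmt_7 {S ι : Type*} [Fintype S] [Fintype ι]
    (h : S → S → ℝ) (validS : S → Prop) (validE : S → S → Prop)
    -- undirected graph: edge validity is symmetric
    (hsym : ∀ a b, validE a b → validE b a)
    (sstart sgoal : S) (t : ι → S) (r : ι → ℝ) (g : ι → S → S)
    (lib : ι → List S)
    -- each library path is a valid path from sstart to the attractor t i
    (hlib : ∀ i, IsValidPath validS validE (lib i) ∧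
      (lib i).head? = some sstart ∧ (lib i).getLast? = some (t i))
    (hvgoal : validS sgoal)
    -- coverage: some subregion covers the goal state
    (hcov : ∃ i, h sgoal (t i) < r i)
    -- any valid covered state admits a valid greedy path to the attractor
    (hreach : ∀ i, ∀ s, validS s → h s (t i) < r i →
      ∃ n : ℕ, (g i)^[n] s = t i ∧
        (∀ m ≤ n, validS ((g i)^[m] s)) ∧
        (∀ m < n, validE ((g i)^[m] s) ((g i)^[m + 1] s))) :
    ∃ i, h sgoal (t i) < r i ∧ ∃ n : ℕ, (g i)^[n] sgoal = t i ∧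
      IsValidPath validS validE
        (lib i ++ (((List.range (n + 1)).map (fun m => (g i)^[m] sgoal)).reverse).tail) ∧
      (lib i ++ (((List.range (n + 1)).map (fun m => (g i)^[m] sgoal)).reverse).tail).head?
        = some sstart ∧
      (lib i ++ (((List.range (n + 1)).map (fun m => (g i)^[m] sgoal)).reverse).tail).getLast?
        = some sgoal :=
  stmt_7_general h validS validE hsym sstart sgoal t r g lib hlib hvgoal hcov hreach
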